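/- Define M(μ) = (1/(γ−1))·√((1+w²)/(1+γw²))·e^{−γ(1−γ)μ²/(2(1+γw²))} − (1/γ)·√((1+w²)/((γ+1)w²+1))·e^{−γ(w²+1−γ)μ²/(2(1+(γ+1)w²))} − 1/(γ(γ−1)) for γ ∈ (0,1) and w > 0. Then M is strictly decreasing on (−∞,0), strictly increasing on (0,∞), and has a unique minimum at μ = 0. -/
import Mathlib


open Real Set

/-- The smoothed dual criterion `M` in the Gaussian location model with Gaussian kernel,
for `γ ∈ (0,1)` and `w > 0`, is strictly decreasing on `(−∞,0)`, strictly increasing on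
`(0,∞)`, and has a unique minimum at `μ = 0`. -/
theorem smoothed_criterion_monotone (γ w : ℝ) (hγ0 : 0 < γ) (hγ1 : γ < 1) (hw : 0 < w) :
    StrictAntiOn
      (fun μ : ℝ =>
        (1 / (γ - 1)) * Real.sqrt ((1 + w^2) / (1 + γ * w^2)) *
            Real.exp (-γ * (1 - γ) * μ^2 / (2 * (1 + γ * w^2)))
          - (1 / γ) * Real.sqrt ((1 + w^2) / ((γ + 1) * w^2 + 1)) *
            Real.exp (-γ * (w^2 + 1 - γ) * μ^2 / (2 * (1 + (γ + 1) * w^2)))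
          - 1 / (γ * (γ - 1)))
      (Set.Iio (0:ℝ)) ∧
    StrictMonoOn
      (fun μ : ℝ =>
        (1 / (γ - 1)) * Real.sqrt ((1 + w^2) / (1 + γ * w^2)) *
            Real.exp (-γ * (1 - γ) * μ^2 / (2 * (1 + γ * w^2)))
          - (1 / γ) * Real.sqrt ((1 + w^2) / ((γ + 1) * w^2 + 1)) *
            Real.exp (-γ * (w^2 + 1 - γ) * μ^2 / (2 * (1 + (γ + 1) * w^2)))
          - 1 / (γ * (γ - 1)))
      (Set.Ioi (0:ℝ)) ∧
    (∀ μ : ℝ, μ ≠ 0 →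
      (fun μ : ℝ =>
        (1 / (γ - 1)) * Real.sqrt ((1 + w^2) / (1 + γ * w^2)) *
            Real.exp (-γ * (1 - γ) * μ^2 / (2 * (1 + γ * w^2)))
          - (1 / γ) * Real.sqrt ((1 + w^2) / ((γ + 1) * w^2 + 1)) *
            Real.exp (-γ * (w^2 + 1 - γ) * μ^2 / (2 * (1 + (γ + 1) * w^2)))
          - 1 / (γ * (γ - 1))) 0 <
      (fun μ : ℝ =>
        (1 / (γ - 1)) * Real.sqrt ((1 + w^2) / (1 + γ * w^2)) *
            Real.exp (-γ * (1 - γ) * μ^2 / (2 * (1 + γ * w^2)))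
          - (1 / γ) * Real.sqrt ((1 + w^2) / ((γ + 1) * w^2 + 1)) *
            Real.exp (-γ * (w^2 + 1 - γ) * μ^2 / (2 * (1 + (γ + 1) * w^2)))
          - 1 / (γ * (γ - 1))) μ) := by

  set F : ℝ → ℝ := fun μ : ℝ =>
        (1 / (γ - 1)) * Real.sqrt ((1 + w^2) / (1 + γ * w^2)) *
            Real.exp (-γ * (1 - γ) * μ^2 / (2 * (1 + γ * w^2)))
          - (1 / γ) * Real.sqrt ((1 + w^2) / ((γ + 1) * w^2 + 1)) *
            Real.exp (-γ * (w^2 + 1 - γ) * μ^2 / (2 * (1 + (γ + 1) * w^2)))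
          - 1 / (γ * (γ - 1)) with hF
  have hD1 : (0:ℝ) < 2 * (1 + γ * w^2) := by nlinarith [sq_nonneg w]
  have hD2 : (0:ℝ) < 2 * (1 + (γ + 1) * w^2) := by nlinarith [sq_nonneg w]
  have hc1 : (1 / (γ - 1)) * Real.sqrt ((1 + w^2) / (1 + γ * w^2)) < 0 := by
    apply mul_neg_of_neg_of_pos
    · apply div_neg_of_pos_of_neg one_pos; linarith
    · apply Real.sqrt_pos.mpr; apply div_pos <;> nlinarith [sq_nonneg w]
  have hc2 : 0 < (1 / γ) * Real.sqrt ((1 + w^2) / ((γ + 1) * w^2 + 1)) := by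
    apply mul_pos (by positivity)
    apply Real.sqrt_pos.mpr; apply div_pos <;> nlinarith [sq_nonneg w]
  have key : ∀ s t : ℝ, s^2 < t^2 → F s < F t := by
    intro s t hst
    have h1 : Real.exp (-γ * (1 - γ) * t^2 / (2 * (1 + γ * w^2))) <
        Real.exp (-γ * (1 - γ) * s^2 / (2 * (1 + γ * w^2))) := by
      apply Real.exp_lt_exp.mpr
      apply div_lt_div_of_pos_right _ hD1
      nlinarith [mul_pos (mul_pos hγ0 (show (0:ℝ) < 1 - γ by linarith)) (sub_pos.mpr hst)]
    have h2 : Real.exp (-γ * (w^2 + 1 - γ) * t^2 / (2 * (1 + (γ + 1) * w^2))) <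
        Real.exp (-γ * (w^2 + 1 - γ) * s^2 / (2 * (1 + (γ + 1) * w^2))) := by
      apply Real.exp_lt_exp.mpr
      apply div_lt_div_of_pos_right _ hD2
      nlinarith [mul_pos (mul_pos hγ0 (show (0:ℝ) < w^2 + 1 - γ by nlinarith [sq_nonneg w])) (sub_pos.mpr hst)]
    have t1 := mul_lt_mul_of_neg_left h1 hc1
    have t2 := mul_lt_mul_of_pos_left h2 hc2
    simp only [hF]
    linarith
  refine ⟨fun x hx y hy hxy => key y x (by nlinarith [mem_Iio.mp hx, mem_Iio.mp hy]),
    fun x hx y hy hxy => key x y (by nlinarith [mem_Ioi.mp hx, mem_Ioi.mp hy]),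
    fun μ hμ => key 0 μ (by rcases lt_or_gt_of_ne hμ with h|h <;> nlinarith)⟩
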